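/- Let α, β > 0, η = α/(α + iβ), and Q(x) = 2(eˣ + η e^{−x})/(e^{2x} + 2 + |η|² e^{−2x}). With u = e^{2x} > 0, one has Re(Q̄(x) Q′(x)) = 0 if and only if the polynomial α⁴(u−1)(u+1)³ + 2α²β² u(u³+1) + β⁴(u−2)u³ vanishes; the positive real roots of this polynomial are u = α/√(α²+β²), and additionally u = (β² − α² ± β√(β² − 3α²))/(α² + β²) when β² ≥ 3α². In particular, when β² < 3α² the function x ↦ Re(Q̄(x)Q′(x)) has exactly one real zero. -/

import Mathlib

/-!
Since `Q = N / D` with `D` real and positive, `Re(Q̄ Q′) = ½ (|Q|²)′`. Because `Re η = |η|² =: m`,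
with `u = e^{2x}` one finds `|Q|² = G(u) := 4u(u² + 2mu + m)/(u² + 2u + m)²`, so
`Re(Q̄ Q′) = u G′(u) = -4u(u² - m)(u² + (4m - 2)u + m)/(u² + 2u + m)³`.
Up to the factor `(α² + β²)²`, the last numerator is the quartic, which thus splits into
`(α² + β²)u² - α²` and a quadratic of discriminant `4β²(β² - 3α²)`, negative when `β² < 3α²`.
-/

open Complex

/-- `η = α/(α + iβ)`. -/
noncomputable def etaSS (α β : ℝ) : ℂ := (α : ℂ) / ((α : ℂ) + Complex.I * (β : ℂ))

/-- The Sasa–Satsuma profile `Q(x) = 2(eˣ + ηe^{-x})/(e^{2x} + 2 + |η|²e^{-2x})`. -/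
noncomputable def QSS (α β : ℝ) (x : ℝ) : ℂ :=
  2 * (Complex.exp (x : ℂ) + etaSS α β * Complex.exp (-(x : ℂ))) /
    (Complex.exp (2 * (x : ℂ)) + 2
      + (Complex.normSq (etaSS α β) : ℂ) * Complex.exp (-(2 * (x : ℂ))))

open ComplexConjugate

lemma normSq_etaSS (α β : ℝ) : normSq (etaSS α β) = α ^ 2 / (α ^ 2 + β ^ 2) := by
  simp only [etaSS, map_div₀, normSq_apply, ofReal_re, ofReal_im, mul_zero, add_zero, add_re,
    mul_re, I_re, zero_mul, I_im, sub_self, add_im, mul_im, one_mul, zero_add]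
  ring

lemma re_etaSS (α β : ℝ) : (etaSS α β).re = normSq (etaSS α β) := by
  simp [etaSS, div_re, normSq_apply]

lemma normSq_ofReal_add_mul_ofReal (a b : ℝ) (w : ℂ) :
    normSq (a + w * b) = a ^ 2 + 2 * a * b * w.re + b ^ 2 * normSq w := by
  simp only [normSq_add, normSq_ofReal, map_mul, conj_ofReal, mul_re, ofReal_re,
    conj_re, conj_im, ofReal_im, mul_zero, sub_zero]
  ring

lemma QSS_denom_eq_ofReal (α β x : ℝ) :
    exp (2 * (x : ℂ)) + 2 + (normSq (etaSS α β) : ℂ) * exp (-(2 * (x : ℂ)))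
      = ((Real.exp (2 * x) + 2 + normSq (etaSS α β) * Real.exp (-(2 * x)) : ℝ) : ℂ) := by
  push_cast
  ring_nf

lemma QSS_denom_ne_zero (α β x : ℝ) :
    exp (2 * (x : ℂ)) + 2 + (normSq (etaSS α β) : ℂ) * exp (-(2 * (x : ℂ))) ≠ 0 := by
  rw [QSS_denom_eq_ofReal, ofReal_ne_zero]
  have := normSq_nonneg (etaSS α β)
  positivity

lemma differentiable_QSS (α β : ℝ) : Differentiable ℝ (QSS α β) := by
  intro x
  unfold QSS
  fun_prop (disch := exact QSS_denom_ne_zero α β x)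

noncomputable def normSqProfile (m u : ℝ) : ℝ :=
  4 * u * (u ^ 2 + 2 * m * u + m) / (u ^ 2 + 2 * u + m) ^ 2

lemma hasDerivAt_normSqProfile {m u : ℝ} (h : u ^ 2 + 2 * u + m ≠ 0) :
    HasDerivAt (normSqProfile m)
      (-4 * (u ^ 2 - m) * (u ^ 2 + (4 * m - 2) * u + m) / (u ^ 2 + 2 * u + m) ^ 3) u := by
  have hden := (((hasDerivAt_pow 2 u).add ((hasDerivAt_id' u).const_mul 2)).add_const m).pow 2
  have hnum := ((hasDerivAt_id' u).const_mul 4).mul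
    (((hasDerivAt_pow 2 u).add ((hasDerivAt_id' u).const_mul (2 * m))).add_const m)
  refine (hnum.div hden (pow_ne_zero 2 h)).congr_deriv ?_
  simp only [Pi.add_apply, Pi.mul_apply, Pi.pow_apply]
  norm_num
  field_simp
  ring

lemma sq_norm_QSS (α β x : ℝ) :
    ‖QSS α β x‖ ^ 2 = normSqProfile (normSq (etaSS α β)) (Real.exp (2 * x)) := by
  have h2x : (2 * (x : ℂ)) = ((2 * x : ℝ) : ℂ) := by push_cast; ring
  rw [Complex.sq_norm, QSS, ← ofReal_neg, h2x, ← ofReal_neg, ← ofReal_exp, ← ofReal_exp,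
    ← ofReal_exp, ← ofReal_exp, normSq_div, normSq_mul, normSq_ofReal_add_mul_ofReal, re_etaSS]
  norm_cast
  have hexp : Real.exp (2 * x) = Real.exp x ^ 2 := by rw [← Real.exp_nat_mul]; norm_num
  rw [normSq_ofReal, normSq_ofNat, normSqProfile, Real.exp_neg, Real.exp_neg, hexp]
  field_simp
  ring

lemma re_conj_QSS_mul_deriv (α β x : ℝ) :
    (conj (QSS α β x) * deriv (QSS α β) x).re =
      Real.exp (2 * x) * deriv (normSqProfile (normSq (etaSS α β))) (Real.exp (2 * x)) := by
  have hQ := (differentiable_QSS α β x).hasDerivAt.norm_sq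
  have hden : Real.exp (2 * x) ^ 2 + 2 * Real.exp (2 * x) + normSq (etaSS α β) ≠ 0 := by
    have := normSq_nonneg (etaSS α β)
    positivity
  have hG := (hasDerivAt_normSqProfile hden).differentiableAt.hasDerivAt.comp x
    ((hasDerivAt_id' x).const_mul 2).exp
  simp_rw [sq_norm_QSS] at hQ
  rw [Complex.inner] at hQ
  rw [mul_comm (conj _)]
  linarith [hQ.unique hG]

def ssQuartic (α β u : ℝ) : ℝ :=
  α ^ 4 * (u - 1) * (u + 1) ^ 3 + 2 * α ^ 2 * β ^ 2 * u * (u ^ 3 + 1) + β ^ 4 * (u - 2) * u ^ 3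

lemma ssQuartic_eq_mul (α β u : ℝ) :
    ssQuartic α β u =
      ((α ^ 2 + β ^ 2) * u ^ 2 - α ^ 2) * ((α ^ 2 + β ^ 2) * u ^ 2 - 2 * (β ^ 2 - α ^ 2) * u + α ^ 2) := by
  unfold ssQuartic
  ring

lemma re_conj_QSS_mul_deriv_eq_zero_iff {α β : ℝ} (hα : α ≠ 0) (x : ℝ) :
    (conj (QSS α β x) * deriv (QSS α β) x).re = 0 ↔ ssQuartic α β (Real.exp (2 * x)) = 0 := by
  rw [re_conj_QSS_mul_deriv, normSq_etaSS]
  set u := Real.exp (2 * x)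
  have hu : 0 < u := Real.exp_pos _
  have hs : 0 < α ^ 2 + β ^ 2 := by positivity
  have hden : 0 < u ^ 2 + 2 * u + α ^ 2 / (α ^ 2 + β ^ 2) := by positivity
  rw [(hasDerivAt_normSqProfile hden.ne').deriv]
  have key : u * (-4 * (u ^ 2 - α ^ 2 / (α ^ 2 + β ^ 2)) *
        (u ^ 2 + (4 * (α ^ 2 / (α ^ 2 + β ^ 2)) - 2) * u + α ^ 2 / (α ^ 2 + β ^ 2)) /
        (u ^ 2 + 2 * u + α ^ 2 / (α ^ 2 + β ^ 2)) ^ 3)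
      = -4 * u / ((α ^ 2 + β ^ 2) ^ 2 * (u ^ 2 + 2 * u + α ^ 2 / (α ^ 2 + β ^ 2)) ^ 3) *
          ssQuartic α β u := by
    rw [ssQuartic_eq_mul]
    field_simp
    ring
  rw [key, mul_eq_zero, or_iff_right (div_neg_of_neg_of_pos (by linarith) (by positivity)).ne]

lemma mul_sq_sub_sq_eq_zero_iff {c a u : ℝ} (hc : 0 < c) (ha : 0 ≤ a) (hu : 0 ≤ u) :
    c * u ^ 2 - a ^ 2 = 0 ↔ u = a / √c := by
  rw [eq_div_iff (Real.sqrt_pos.2 hc).ne', ← sq_eq_sq₀ (by positivity) ha, mul_pow,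
    Real.sq_sqrt hc.le, sub_eq_zero, mul_comm]

lemma ssQuadratic_eq_zero_iff {α β : ℝ} (hβ : β ≠ 0) (u : ℝ) :
    (α ^ 2 + β ^ 2) * u ^ 2 - 2 * (β ^ 2 - α ^ 2) * u + α ^ 2 = 0 ↔
      3 * α ^ 2 ≤ β ^ 2 ∧
        (u = (β ^ 2 - α ^ 2 + β * √(β ^ 2 - 3 * α ^ 2)) / (α ^ 2 + β ^ 2) ∨
          u = (β ^ 2 - α ^ 2 - β * √(β ^ 2 - 3 * α ^ 2)) / (α ^ 2 + β ^ 2)) := by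
  have hs : α ^ 2 + β ^ 2 ≠ 0 := by positivity
  have hdisc : discrim (α ^ 2 + β ^ 2) (-2 * (β ^ 2 - α ^ 2)) (α ^ 2) = 4 * β ^ 2 * (β ^ 2 - 3 * α ^ 2) := by
    unfold discrim
    ring
  have hquad : (α ^ 2 + β ^ 2) * u ^ 2 - 2 * (β ^ 2 - α ^ 2) * u + α ^ 2
      = (α ^ 2 + β ^ 2) * (u * u) + -2 * (β ^ 2 - α ^ 2) * u + α ^ 2 := by ring
  rw [hquad]
  by_cases h3 : 3 * α ^ 2 ≤ β ^ 2
  · have hsq : discrim (α ^ 2 + β ^ 2) (-2 * (β ^ 2 - α ^ 2)) (α ^ 2)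
        = (2 * β * √(β ^ 2 - 3 * α ^ 2)) * (2 * β * √(β ^ 2 - 3 * α ^ 2)) := by
      rw [hdisc]
      linear_combination (-4 * β ^ 2) * Real.sq_sqrt (sub_nonneg.2 h3)
    rw [quadratic_eq_zero_iff hs hsq, and_iff_right h3]
    congr! 2 <;> field_simp
  · simp only [h3, false_and, iff_false]
    refine quadratic_ne_zero_of_discrim_ne_sq (fun r hr => ?_) u
    have : 0 < β ^ 2 := by positivity
    nlinarith [sq_nonneg r, not_le.1 h3]

lemma existsUnique_exp_two_mul_eq {r : ℝ} (hr : 0 < r) : ∃! x : ℝ, Real.exp (2 * x) = r := by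
  refine ⟨Real.log r / 2, ?_, fun y hy => ?_⟩
  · show Real.exp (2 * (Real.log r / 2)) = r
    rw [mul_div_cancel₀ _ two_ne_zero, Real.exp_log hr]
  · rw [← hy, Real.log_exp]
    ring

/-- Zeros of `Re(Q̄ Q′)`: with `u = e^{2x}`, `Re(Q̄(x)Q′(x)) = 0` iff
`α⁴(u-1)(u+1)³ + 2α²β²u(u³+1) + β⁴(u-2)u³ = 0`; the positive roots of this
polynomial are `u = α/√(α²+β²)` and, when `β² ≥ 3α²`,
`u = (β²-α² ± β√(β²-3α²))/(α²+β²)`.  In particular, when `β² < 3α²` the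
function `x ↦ Re(Q̄(x)Q′(x))` has exactly one real zero. -/
theorem stmt_11 (α β : ℝ) (hα : 0 < α) (hβ : 0 < β) :
    (∀ x : ℝ,
        ((starRingEnd ℂ) (QSS α β x) * deriv (QSS α β) x).re = 0 ↔
          α ^ 4 * (Real.exp (2 * x) - 1) * (Real.exp (2 * x) + 1) ^ 3
            + 2 * α ^ 2 * β ^ 2 * Real.exp (2 * x) * (Real.exp (2 * x) ^ 3 + 1)
            + β ^ 4 * (Real.exp (2 * x) - 2) * Real.exp (2 * x) ^ 3 = 0)
    ∧ (∀ u : ℝ, 0 < u →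
        (α ^ 4 * (u - 1) * (u + 1) ^ 3 + 2 * α ^ 2 * β ^ 2 * u * (u ^ 3 + 1)
            + β ^ 4 * (u - 2) * u ^ 3 = 0 ↔
          (u = α / Real.sqrt (α ^ 2 + β ^ 2) ∨
            (3 * α ^ 2 ≤ β ^ 2 ∧
              (u = (β ^ 2 - α ^ 2 + β * Real.sqrt (β ^ 2 - 3 * α ^ 2)) / (α ^ 2 + β ^ 2) ∨
                u = (β ^ 2 - α ^ 2 - β * Real.sqrt (β ^ 2 - 3 * α ^ 2)) / (α ^ 2 + β ^ 2))))))
    ∧ (β ^ 2 < 3 * α ^ 2 →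
        ∃! x : ℝ, ((starRingEnd ℂ) (QSS α β x) * deriv (QSS α β) x).re = 0) := by
  have hzero := re_conj_QSS_mul_deriv_eq_zero_iff (β := β) hα.ne'
  have hroots : ∀ u : ℝ, 0 < u → (ssQuartic α β u = 0 ↔ (u = α / √(α ^ 2 + β ^ 2) ∨
      3 * α ^ 2 ≤ β ^ 2 ∧
        (u = (β ^ 2 - α ^ 2 + β * √(β ^ 2 - 3 * α ^ 2)) / (α ^ 2 + β ^ 2) ∨
          u = (β ^ 2 - α ^ 2 - β * √(β ^ 2 - 3 * α ^ 2)) / (α ^ 2 + β ^ 2)))) := fun u hu => by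
    rw [ssQuartic_eq_mul, mul_eq_zero, mul_sq_sub_sq_eq_zero_iff (by positivity) hα.le hu.le,
      ssQuadratic_eq_zero_iff hβ.ne']
  refine ⟨hzero, hroots, fun hlt => ?_⟩
  have hunique := existsUnique_exp_two_mul_eq (r := α / √(α ^ 2 + β ^ 2)) (by positivity)
  refine (existsUnique_congr fun x => ?_).2 hunique
  rw [hzero, hroots _ (Real.exp_pos _)]
  simp [not_le.2 hlt]
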